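/- Let H be an acceptable Hintikka set and s a closed term. Then ¬(s ≐ s) ∉ H, i.e. H never contains the negated Leibniz-reflexivity statement. -/
import Mathlib


namespace HintikkaHOL

/-- Simple types over base types `o` (Booleans) and `i` (individuals). -/
inductive Ty : Type
  | o : Ty
  | i : Ty
  | arr : Ty → Ty → Ty
deriving DecidableEq

open Ty

/-- Typed de Bruijn variables. -/
inductive Var : List Ty → Ty → Type
  | vz {Γ τ} : Var (τ :: Γ) τ
  | vs {Γ σ τ} : Var Γ τ → Var (σ :: Γ) τ

/-- Terms of Church's type theory over a signature `S` of parameters,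
with primitive equality `eq τ : τ → τ → o` as the only logical constant. -/
inductive Tm (S : Ty → Type) : List Ty → Ty → Type
  | var {Γ τ} : Var Γ τ → Tm S Γ τ
  | par {Γ τ} : S τ → Tm S Γ τ
  | eq {Γ} (τ : Ty) : Tm S Γ (arr τ (arr τ o))
  | app {Γ a b} : Tm S Γ (arr a b) → Tm S Γ a → Tm S Γ b
  | lam {Γ a b} : Tm S (a :: Γ) b → Tm S Γ (arr a b)

variable {S : Ty → Type}

/-- Renamings. -/
abbrev Ren (Γ Δ : List Ty) : Type := ∀ τ, Var Γ τ → Var Δ τ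

def Ren.lift {Γ Δ} (r : Ren Γ Δ) (σ : Ty) : Ren (σ :: Γ) (σ :: Δ)
  | _, .vz => .vz
  | _, .vs w => .vs (r _ w)

def rename {Γ Δ} (r : Ren Γ Δ) : ∀ {τ}, Tm S Γ τ → Tm S Δ τ
  | _, .var v => .var (r _ v)
  | _, .par p => .par p
  | _, .eq τ => .eq τ
  | _, .app f a => .app (rename r f) (rename r a)
  | _, .lam b => .lam (rename (Ren.lift r _) b)

/-- Substitutions. -/
abbrev Sub (S : Ty → Type) (Γ Δ : List Ty) : Type := ∀ τ, Var Γ τ → Tm S Δ τ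

def Sub.lift {Γ Δ} (s : Sub S Γ Δ) (σ : Ty) : Sub S (σ :: Γ) (σ :: Δ)
  | _, .vz => .var .vz
  | _, .vs w => rename (fun _ u => Var.vs u) (s _ w)

def subst {Γ Δ} (s : Sub S Γ Δ) : ∀ {τ}, Tm S Γ τ → Tm S Δ τ
  | _, .var v => s _ v
  | _, .par p => .par p
  | _, .eq τ => .eq τ
  | _, .app f a => .app (subst s f) (subst s a)
  | _, .lam b => .lam (subst (Sub.lift s _) b)

/-- The substitution sending the outermost variable to `a`. -/
def Sub.single {Γ σ} (a : Tm S Γ σ) : Sub S (σ :: Γ) Γ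
  | _, .vz => a
  | _, .vs w => .var w

def subst1 {Γ σ τ} (a : Tm S Γ σ) (b : Tm S (σ :: Γ) τ) : Tm S Γ τ :=
  subst (Sub.single a) b

/-- Weakening of a closed term into any context. -/
def Ren.fromEmpty {Γ} : Ren [] Γ := fun _ v => nomatch v

def wk0 {Γ τ} (t : Tm S [] τ) : Tm S Γ τ :=
  rename Ren.fromEmpty t

/-- The equation `s =^τ t`. -/
def eqT {Γ} (τ : Ty) (s t : Tm S Γ τ) : Tm S Γ o :=
  .app (.app (.eq τ) s) t

/-- `⊤ := (=^o) =^{ooo} (=^o)`. -/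
def topT {Γ} : Tm S Γ o :=
  eqT (arr o (arr o o)) (.eq o) (.eq o)

/-- `⊥ := (λP:o. P) =^{oo} (λP:o. ⊤)`. -/
def botT {Γ} : Tm S Γ o :=
  eqT (arr o o) (.lam (.var .vz)) (.lam topT)

/-- `¬ := λP:o. P =^o ⊥`. -/
def notC {Γ} : Tm S Γ (arr o o) :=
  .lam (eqT o (.var .vz) botT)

/-- `¬ s`. -/
def negT {Γ} (s : Tm S Γ o) : Tm S Γ o :=
  .app notC s

/-- `∧ := λP Q. (λF:ooo. F ⊤ ⊤) =^{o(ooo)} (λF. F P Q)`. -/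
def andC {Γ} : Tm S Γ (arr o (arr o o)) :=
  .lam (.lam (eqT (arr (arr o (arr o o)) o)
    (.lam (.app (.app (.var .vz) topT) topT))
    (.lam (.app (.app (.var .vz) (.var (.vs (.vs .vz)))) (.var (.vs .vz))))))

/-- `∨ := λP Q. ¬(¬P ∧ ¬Q)`. -/
def orC {Γ} : Tm S Γ (arr o (arr o o)) :=
  .lam (.lam (negT (.app (.app andC (negT (.var (.vs .vz)))) (negT (.var .vz)))))

/-- `⇒ := λP Q. ¬P ∨ Q`. -/
def impC {Γ} : Tm S Γ (arr o (arr o o)) :=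
  .lam (.lam (.app (.app orC (negT (.var (.vs .vz)))) (.var .vz)))

/-- `Π^τ := λP:oτ. P =^{oτ} (λX:τ. ⊤)`. -/
def piC {Γ} (τ : Ty) : Tm S Γ (arr (arr τ o) o) :=
  .lam (eqT (arr τ o) (.var .vz) (.lam topT))

/-- Leibniz equality `s ≐ t := Π^{oτ} (λP:oτ. (P s) ⇒ (P t))`. -/
def leibT {Γ τ} (s t : Tm S Γ τ) : Tm S Γ o :=
  .app (piC (arr τ o))
    (.lam (.app (.app impC (.app (.var .vz) (rename (fun _ v => Var.vs v) s)))
                (.app (.var .vz) (rename (fun _ v => Var.vs v) t))))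

/-- βη-conversion. -/
inductive Conv : ∀ {Γ : List Ty} {τ : Ty}, Tm S Γ τ → Tm S Γ τ → Prop
  | refl {Γ τ} (s : Tm S Γ τ) : Conv s s
  | symm {Γ τ} {s t : Tm S Γ τ} : Conv s t → Conv t s
  | trans {Γ τ} {s t u : Tm S Γ τ} : Conv s t → Conv t u → Conv s u
  | appCongr {Γ a b} {f f' : Tm S Γ (arr a b)} {s s' : Tm S Γ a} :
      Conv f f' → Conv s s' → Conv (.app f s) (.app f' s')
  | lamCongr {Γ a b} {s s' : Tm S (a :: Γ) b} :
      Conv s s' → Conv (.lam s) (.lam s')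
  | beta {Γ a b} (body : Tm S (a :: Γ) b) (s : Tm S Γ a) :
      Conv (.app (.lam body) s) (subst1 s body)
  | eta {Γ a b} (f : Tm S Γ (arr a b)) :
      Conv (.lam (.app (rename (fun _ v => Var.vs v) f) (.var .vz))) f

/-- Atomic formulas: head symbol is a parameter (or a variable). -/
inductive Atomic : ∀ {Γ : List Ty} {τ : Ty}, Tm S Γ τ → Prop
  | par {Γ τ} (p : S τ) : Atomic (Tm.par (Γ := Γ) p)
  | var {Γ τ} (v : Var Γ τ) : Atomic (Tm.var (S := S) v)
  | app {Γ a b} {f : Tm S Γ (arr a b)} {s : Tm S Γ a} : Atomic f → Atomic (.app f s)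

/-- Paired spines of closed arguments, for the decomposition property `∇_d`:
a value of `Spine2 S σ τ` is a list of pairs `(sⁱ, tⁱ)` of closed terms turning a head
of type `σ` into two applications `h s¹ … sⁿ` and `h t¹ … tⁿ` of type `τ`. -/
inductive Spine2 (S : Ty → Type) : Ty → Ty → Type
  | nil {τ} : Spine2 S τ τ
  | cons {a σ τ} (s t : Tm S [] a) (rest : Spine2 S σ τ) : Spine2 S (arr a σ) τ

def appSpineL : ∀ {σ τ}, Tm S [] σ → Spine2 S σ τ → Tm S [] τ
  | _, _, h, .nil => h
  | _, _, h, .cons s _ rest => appSpineL (.app h s) rest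

def appSpineR : ∀ {σ τ}, Tm S [] σ → Spine2 S σ τ → Tm S [] τ
  | _, _, h, .nil => h
  | _, _, h, .cons _ t rest => appSpineR (.app h t) rest

/-- `∃ i, (sⁱ ≠ tⁱ) ∈ H` for a paired spine. -/
def ExistsNeq (H : Set (Tm S [] o)) : ∀ {σ τ}, Spine2 S σ τ → Prop
  | _, _, .nil => False
  | _, _, .cons (a := a) s t rest => negT (eqT a s t) ∈ H ∨ ExistsNeq H rest

/-- Steen's acceptable Hintikka sets: sets of closed formulas (sentences) satisfying
the ten properties `∇_c, ∇_βη, ∇_=^r, ∇_=^s, ∇_b^+, ∇_b^-, ∇_f^+, ∇_f^-, ∇_m, ∇_d`. -/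
structure Acceptable (S : Ty → Type) (H : Set (Tm S [] o)) : Prop where
  nabla_c : ∀ s : Tm S [] o, ¬ (s ∈ H ∧ negT s ∈ H)
  nabla_betaEta : ∀ s t : Tm S [] o, Conv s t → s ∈ H → t ∈ H
  nabla_eq_r : ∀ {τ} (s : Tm S [] τ), negT (eqT τ s s) ∉ H
  nabla_eq_s : ∀ {τ} (u : Tm S [τ] o) (s t : Tm S [] τ),
      subst1 s u ∈ H → eqT τ s t ∈ H → subst1 t u ∈ H
  nabla_b_pos : ∀ s t : Tm S [] o, eqT o s t ∈ H →
      (s ∈ H ∧ t ∈ H) ∨ (negT s ∈ H ∧ negT t ∈ H)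
  nabla_b_neg : ∀ s t : Tm S [] o, negT (eqT o s t) ∈ H →
      (s ∈ H ∧ negT t ∈ H) ∨ (negT s ∈ H ∧ t ∈ H)
  nabla_f_pos : ∀ {a b} (f g : Tm S [] (arr a b)), eqT (arr a b) f g ∈ H →
      ∀ s : Tm S [] a, eqT b (.app f s) (.app g s) ∈ H
  nabla_f_neg : ∀ {a b} (f g : Tm S [] (arr a b)), negT (eqT (arr a b) f g) ∈ H →
      ∃ w : S a, negT (eqT b (.app f (.par w)) (.app g (.par w))) ∈ H
  nabla_m : ∀ s t : Tm S [] o, Atomic s → Atomic t → s ∈ H → negT t ∈ H →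
      negT (eqT o s t) ∈ H
  nabla_d : ∀ {σ τ} (h : Tm S [] σ) (sp : Spine2 S σ τ),
      negT (eqT τ (appSpineL h sp) (appSpineR h sp)) ∈ H → ExistsNeq H sp

/-- `H` is saturated iff `s ∈ H` or `¬s ∈ H` for every closed formula `s`. -/
def Saturated (H : Set (Tm S [] o)) : Prop :=
  ∀ s : Tm S [] o, s ∈ H ∨ negT s ∈ H

variable {S : Ty → Type} {H : Set (Tm S [] Ty.o)}


theorem subst_rename : ∀ {Γ Δ E : List Ty} {τ} (r : Ren Γ Δ) (σ : Sub S Δ E) (t : Tm S Γ τ),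
    subst σ (rename r t) = subst (fun τ v => σ τ (r τ v)) t
  | _, _, _, _, _, _, .var v => rfl
  | _, _, _, _, _, _, .par p => rfl
  | _, _, _, _, _, _, .eq τ => rfl
  | _, _, _, _, r, σ, .app f a => by
      simp only [rename, subst, subst_rename r σ f, subst_rename r σ a]
  | _, _, _, _, r, σ, .lam (a := a) b => by
      simp only [rename, subst]
      rw [subst_rename (Ren.lift r a) (Sub.lift σ a) b]
      have h : (fun τ' v => Sub.lift σ a τ' (Ren.lift r a τ' v))
          = Sub.lift (fun τ' v => σ τ' (r τ' v)) a := by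
        funext τ' v; cases v <;> rfl
      rw [h]

theorem subst_id : ∀ {Γ : List Ty} {τ} (t : Tm S Γ τ),
    subst (fun _ v => Tm.var v) t = t
  | _, _, .var v => rfl
  | _, _, .par p => rfl
  | _, _, .eq τ => rfl
  | _, _, .app f a => by simp only [subst, subst_id f, subst_id a]
  | Γ, _, .lam (a := a) b => by
      simp only [subst]
      have h : (Sub.lift (S := S) (Γ := Γ) (Δ := Γ) (fun _ v => Tm.var v) a)
          = (fun _ v => Tm.var v) := by
        funext τ' v; cases v <;> rfl
      rw [h, subst_id b]

theorem subst1_wk {Γ σ τ} (a : Tm S Γ σ) (t : Tm S Γ τ) :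
    subst1 a (rename (fun _ v => Var.vs v) t) = t := by
  rw [subst1, subst_rename]
  exact subst_id t

theorem subst_var_ren : ∀ {Γ Δ : List Ty} {τ} (r : Ren Γ Δ) (t : Tm S Γ τ),
    subst (fun _ v => Tm.var (r _ v)) t = rename r t
  | _, _, _, _, .var v => rfl
  | _, _, _, _, .par p => rfl
  | _, _, _, _, .eq τ => rfl
  | _, _, _, r, .app f a => by
      simp only [subst, rename, subst_var_ren r f, subst_var_ren r a]
  | _, _, _, r, .lam (a := a) b => by
      simp only [subst, rename]
      have h : (Sub.lift (S := S) (fun _ v => Tm.var (r _ v)) a)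
          = (fun _ v => Tm.var (Ren.lift r a _ v)) := by
        funext τ' v; cases v <;> rfl
      rw [h, subst_var_ren (Ren.lift r a) b]

theorem subst_lift_wk2 {Γ σ a τ} (q : Tm S Γ σ) (t : Tm S Γ τ) :
    subst (Sub.lift (Sub.single q) a)
        (rename (fun _ v => Var.vs v) (rename (fun _ v => Var.vs v) t))
      = rename (fun _ v => Var.vs v) t := by
  rw [subst_rename, subst_rename]
  exact subst_var_ren (fun _ v => Var.vs v) t

-- defeq tests
example {τ} (F : Tm S [] (arr (arr τ o) o)) :
    subst1 F (eqT (arr (arr τ o) o) (.var .vz) (.lam topT)) = eqT _ F (.lam topT) := rfl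
example (X : Tm S [] o) : subst1 X (eqT o (.var .vz) botT) = eqT o X botT := rfl
example (X : Tm S [] o) : subst1 X (Tm.var (S:=S) .vz) = X := rfl

variable {H : Set (Tm S [] Ty.o)}

/-- Conv congruence for equations. -/
theorem conv_eqT {Γ τ} {s s' t t' : Tm S Γ τ} (hs : Conv s s') (ht : Conv t t') :
    Conv (eqT τ s t) (eqT τ s' t') :=
  Conv.appCongr (Conv.appCongr (Conv.refl _) hs) ht

theorem conv_negT {Γ} {s s' : Tm S Γ o} (hs : Conv s s') :
    Conv (negT s) (negT s') :=
  Conv.appCongr (Conv.refl _) hs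

/-- `¬X` converts to `X =ᵒ ⊥`. -/
theorem conv_negT_eq {Γ} (X : Tm S Γ o) : Conv (negT X) (eqT o X botT) :=
  Conv.beta (eqT o (.var .vz) botT) X

/-- `¬⊤ ∉ H`. -/
theorem neg_top_not_mem (hH : Acceptable S H) : negT topT ∉ H :=
  hH.nabla_eq_r (Tm.eq o)

/-- `⊥ ∉ H`. -/
theorem bot_not_mem (hH : Acceptable S H) : botT ∉ H := by
  intro hb
  have h1 := hH.nabla_f_pos _ _ hb (negT topT)
  have h2 : eqT o (negT topT) topT ∈ H := by
    refine hH.nabla_betaEta _ _ (conv_eqT ?_ ?_) h1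
    · exact Conv.beta (.var .vz) (negT topT)
    · exact Conv.beta topT (negT topT)
  rcases hH.nabla_b_pos _ _ h2 with ⟨hnt, ht⟩ | ⟨_, hnt⟩
  · exact hH.nabla_c topT ⟨ht, hnt⟩
  · exact neg_top_not_mem hH hnt

/-- Double negation elimination in `H`. -/
theorem dneg_mem (hH : Acceptable S H) {X : Tm S [] Ty.o}
    (h : negT (negT X) ∈ H) : X ∈ H := by
  have h1 : negT (eqT o X botT) ∈ H :=
    hH.nabla_betaEta _ _ (conv_negT (conv_negT_eq X)) h
  rcases hH.nabla_b_neg _ _ h1 with ⟨hX, _⟩ | ⟨_, hb⟩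
  · exact hX
  · exact absurd hb (bot_not_mem hH)

/-- `p ⇒ q` converts to `(¬p) ∨ q`. -/
theorem conv_impC (p q : Tm S [] Ty.o) :
    Conv (.app (.app impC p) q) (.app (.app orC (negT p)) q) := by
  have h1 : Conv (Tm.app (Tm.app (impC (S := S)) p) q)
      (Tm.app (Tm.lam (.app (.app orC (negT (rename (fun _ v => Var.vs v) p))) (.var .vz))) q) :=
    Conv.appCongr (Conv.beta _ p) (Conv.refl q)
  refine h1.trans ?_
  have h2 := Conv.beta (S := S)
    (Tm.app (Tm.app orC (negT (rename (fun _ v => Var.vs v) p))) (.var .vz)) q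
  have e : subst1 q (Tm.app (Tm.app orC (negT (rename (fun _ v => Var.vs v) p))) (.var .vz))
      = Tm.app (Tm.app orC (negT p)) q := by
    show Tm.app (Tm.app _ (Tm.app _ (subst1 q (rename (fun _ v => Var.vs v) p)))) q = _
    rw [subst1_wk]
    rfl
  rw [e] at h2; exact h2

/-- `p ∨ q` converts to `¬(¬p ∧ ¬q)`. -/
theorem conv_orC (p q : Tm S [] Ty.o) :
    Conv (.app (.app orC p) q) (negT (.app (.app andC (negT p)) (negT q))) := by
  have h1 : Conv (Tm.app (Tm.app (orC (S := S)) p) q)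
      (Tm.app (Tm.lam (negT (.app (.app andC (negT (rename (fun _ v => Var.vs v) p)))
        (negT (.var .vz))))) q) :=
    Conv.appCongr (Conv.beta _ p) (Conv.refl q)
  refine h1.trans ?_
  have h2 := Conv.beta (S := S)
    (negT (.app (.app andC (negT (rename (fun _ v => Var.vs v) p))) (negT (.var .vz)))) q
  have e : subst1 q (negT (.app (.app andC (negT (rename (fun _ v => Var.vs v) p)))
        (negT (Tm.var .vz))))
      = negT (.app (.app andC (negT p)) (negT q)) := by
    show Tm.app _ (Tm.app (Tm.app _ (Tm.app _ (subst1 q (rename (fun _ v => Var.vs v) p)))) _) = _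
    rw [subst1_wk]
    rfl
  rw [e] at h2; exact h2

/-- `p ∧ q` converts to the equation defining it. -/
theorem conv_andC (p q : Tm S [] Ty.o) :
    Conv (.app (.app andC p) q)
      (eqT (arr (arr o (arr o o)) o)
        (.lam (.app (.app (.var .vz) topT) topT))
        (.lam (.app (.app (.var .vz) (rename (fun _ v => Var.vs v) p))
          (rename (fun _ v => Var.vs v) q)))) := by
  have h1 : Conv (Tm.app (Tm.app (andC (S := S)) p) q)
      (Tm.app (Tm.lam (eqT (arr (arr o (arr o o)) o)
        (.lam (.app (.app (.var .vz) topT) topT))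
        (.lam (.app (.app (.var .vz) (rename (fun _ v => Var.vs v)
            (rename (fun _ v => Var.vs v) p))) (.var (.vs .vz)))))) q) :=
    Conv.appCongr (Conv.beta _ p) (Conv.refl q)
  refine h1.trans ?_
  have h2 := Conv.beta (S := S) (eqT (arr (arr o (arr o o)) o)
        (.lam (.app (.app (.var .vz) topT) topT))
        (.lam (.app (.app (.var .vz) (rename (fun _ v => Var.vs v)
            (rename (fun _ v => Var.vs v) p))) (.var (.vs .vz))))) q
  have e : subst1 q (eqT (S := S) (arr (arr o (arr o o)) o)
        (.lam (.app (.app (.var .vz) topT) topT))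
        (.lam (.app (.app (.var .vz) (rename (fun _ v => Var.vs v)
            (rename (fun _ v => Var.vs v) p))) (.var (.vs .vz)))))
      = eqT (arr (arr o (arr o o)) o)
        (.lam (.app (.app (.var .vz) topT) topT))
        (.lam (.app (.app (.var .vz) (rename (fun _ v => Var.vs v) p))
          (rename (fun _ v => Var.vs v) q))) := by
    show eqT _ _ (Tm.lam (Tm.app (Tm.app _ (subst (Sub.lift (Sub.single q) _)
      (rename (fun _ v => Var.vs v) (rename (fun _ v => Var.vs v) p)))) _)) = _
    rw [subst_lift_wk2]
    rfl
  rw [e] at h2; exact h2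

/-- First projection. -/
theorem conv_proj1 (X Y : Tm S [] Ty.o) :
    Conv (.app (.app (.lam (.lam (.var (.vs .vz)))) X) Y) X := by
  have h1 : Conv (Tm.app (Tm.app (Tm.lam (S := S) (.lam (.var (.vs .vz)))) X) Y)
      (Tm.app (Tm.lam (rename (fun _ v => Var.vs v) X)) Y) :=
    Conv.appCongr (Conv.beta _ X) (Conv.refl Y)
  refine h1.trans ?_
  have h2 := Conv.beta (rename (fun _ v => Var.vs v) X) Y
  rw [subst1_wk] at h2; exact h2

/-- Second projection. -/
theorem conv_proj2 (X Y : Tm S [] Ty.o) :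
    Conv (.app (.app (.lam (.lam (.var .vz))) X) Y) Y := by
  have h1 : Conv (Tm.app (Tm.app (Tm.lam (S := S) (.lam (.var .vz))) X) Y)
      (Tm.app (Tm.lam (.var .vz)) Y) :=
    Conv.appCongr (Conv.beta _ X) (Conv.refl Y)
  exact h1.trans (Conv.beta _ Y)


/-- `¬(s ≐ s) ∉ H`. -/
theorem neg_leib_refl_not_mem (hH : Acceptable S H) {τ : Ty} (s : Tm S [] τ) :
    negT (leibT s s) ∉ H := by
  intro hmem
  set F : Tm S [] (arr (arr τ o) o) :=
    .lam (.app (.app impC (.app (.var .vz) (rename (fun _ v => Var.vs v) s)))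
               (.app (.var .vz) (rename (fun _ v => Var.vs v) s))) with hF
  -- Step 1: β-reduce the Π
  have h1 : negT (eqT (arr (arr τ o) o) F (.lam topT)) ∈ H :=
    hH.nabla_betaEta _ _ (conv_negT (Conv.beta (eqT (arr (arr τ o) o) (.var .vz) (.lam topT)) F)) hmem
  -- Step 2: functional extensionality (negative)
  obtain ⟨w, hw⟩ := hH.nabla_f_neg _ _ h1
  set q : Tm S [] Ty.o := .app (.par w) s with hq
  -- Step 3: β-reduce both sides
  have cF : Conv (.app F (.par w)) (.app (.app impC q) q) := by
    have c := Conv.beta (S := S)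
      (.app (.app impC (.app (.var .vz) (rename (fun _ v => Var.vs v) s)))
            (.app (.var .vz) (rename (fun _ v => Var.vs v) s))) (.par w)
    have e : subst1 (Tm.par (S := S) w)
        (.app (.app impC (.app (.var .vz) (rename (fun _ v => Var.vs v) s)))
              (.app (.var .vz) (rename (fun _ v => Var.vs v) s)))
        = .app (.app impC q) q := by
      show Tm.app (Tm.app _ (Tm.app _ (subst1 _ (rename (fun _ v => Var.vs v) s))))
        (Tm.app _ (subst1 _ (rename (fun _ v => Var.vs v) s))) = _
      rw [subst1_wk]
      rfl
    rw [e] at c; exact c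
  have hA : negT (eqT o (.app (.app impC q) q) topT) ∈ H :=
    hH.nabla_betaEta _ _ (conv_negT (conv_eqT cF (Conv.beta topT (.par w)))) hw
  -- Step 4: boolean decomposition
  rcases hH.nabla_b_neg _ _ hA with ⟨_, hnt⟩ | ⟨hnA, _⟩
  · exact neg_top_not_mem hH hnt
  -- Step 5: unfold ⇒ and ∨, then eliminate double negation
  have hY : Tm.app (Tm.app andC (negT (negT q))) (negT q) ∈ H := by
    refine dneg_mem hH (hH.nabla_betaEta _ _
      (conv_negT ((conv_impC q q).trans (conv_orC (negT q) q))) hnA)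
  -- Step 6: unfold ∧
  have heq := hH.nabla_betaEta _ _ (conv_andC (negT (negT q)) (negT q)) hY
  -- Step 7: project
  have proj : ∀ (G : Tm S [] (arr o (arr o o))) (X : Tm S [] Ty.o),
      Conv (.app (.app G (negT (negT q))) (negT q)) X →
      Conv (.app (.app G topT) topT) topT → X ∈ H := by
    intro G X hGX hGT
    have hp := hH.nabla_f_pos _ _ heq G
    have cl : Conv (Tm.app (Tm.lam (S := S) (.app (.app (.var .vz) topT) topT)) G) topT :=
      (Conv.beta _ G).trans hGT
    have cr : Conv (Tm.app (Tm.lam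
        (.app (.app (.var .vz) (rename (fun _ v => Var.vs v) (negT (negT q))))
          (rename (fun _ v => Var.vs v) (negT q)))) G) X := by
      have c := Conv.beta (S := S)
        (.app (.app (.var .vz) (rename (fun _ v => Var.vs v) (negT (negT q))))
          (rename (fun _ v => Var.vs v) (negT q))) G
      have e : subst1 G (Tm.app (Tm.app (Tm.var .vz)
            (rename (fun _ v => Var.vs v) (negT (negT q))))
          (rename (fun _ v => Var.vs v) (negT q)))
          = .app (.app G (negT (negT q))) (negT q) := by
        show Tm.app (Tm.app _ (subst1 _ (rename (fun _ v => Var.vs v) _)))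
          (subst1 _ (rename (fun _ v => Var.vs v) _)) = _
        rw [subst1_wk, subst1_wk]
        rfl
      rw [e] at c; exact c.trans hGX
    have ht : eqT o topT X ∈ H :=
      hH.nabla_betaEta _ _ (conv_eqT cl cr) hp
    rcases hH.nabla_b_pos _ _ ht with ⟨_, hX⟩ | ⟨hnt, _⟩
    · exact hX
    · exact absurd hnt (neg_top_not_mem hH)
  have hq1 : negT (negT q) ∈ H :=
    proj (.lam (.lam (.var (.vs .vz)))) _ (conv_proj1 _ _) (conv_proj1 _ _)
  have hq2 : negT q ∈ H :=
    proj (.lam (.lam (.var .vz))) _ (conv_proj2 _ _) (conv_proj2 _ _)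
  exact hH.nabla_c q ⟨dneg_mem hH hq1, hq2⟩

end HintikkaHOL
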